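/- For the binary closed chain, let a(x,S) denote the number of steps needed to first reach a state of free movement starting from state x under competition resolution rule S (a(x,S) = ∞ if a free-movement state is never reached). Then for the long cluster rule S0 and every state x, a(x,S0) = l(x), and for every competition resolution rule S, a(x,S) ≥ l(x). Hence S0 minimizes the time to reach free movement from every initial state. -/
import Mathlib


open Function

namespace ContourChain

variable {N : ℕ}

/-- Particles `i` and `i+1` compete at node `(i, i+1)` iff `x i = 0` and `x (i+1) = 1`. -/
def Competes (x : ZMod N → Bool) (i : ZMod N) : Prop :=
  x i = false ∧ x (i + 1) = true

/-- `x'` is a possible successor of `x` under some competition resolution rule: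
a particle stays only if it is involved in a competition, and in each competition
exactly one of the two particles moves. -/
def IsStep (x x' : ZMod N → Bool) : Prop :=
  (∀ i, x' i = x i → Competes x i ∨ Competes x (i - 1)) ∧
  (∀ i, Competes x i → (x' i = x i ↔ x' (i + 1) = !(x (i + 1))))

/-- Maximal length (capped at `N`) of a cyclic run of the value `b` in `x`. -/
noncomputable def maxRun (x : ZMod N → Bool) (b : Bool) : ℕ :=
  sSup {s : ℕ | s ≤ N ∧ ∃ i : ZMod N, ∀ k : ℕ, k < s → x (i + (k : ZMod N)) = b}

/-- Maximal length of a 0-cluster. -/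
noncomputable def l0 (x : ZMod N → Bool) : ℕ := maxRun x false

/-- Maximal length of a 1-cluster. -/
noncomputable def l1 (x : ZMod N → Bool) : ℕ := maxRun x true

/-- `l(x) = min (l0 x) (l1 x)`. -/
noncomputable def lmin (x : ZMod N → Bool) : ℕ := min (l0 x) (l1 x)

/-- One step in which every left competitor (the particle moving from cell 0 to cell 1) wins. -/
def leftStep (x : ZMod N → Bool) : ZMod N → Bool :=
  fun i => if x i = true ∧ x (i - 1) = false then true else !(x i)

/-- One step in which every right competitor (the particle moving from cell 1 to cell 0) wins. -/
def rightStep (x : ZMod N → Bool) : ZMod N → Bool :=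
  fun i => if x i = false ∧ x (i + 1) = true then false else !(x i)

/-- The long cluster rule `S₀`: left competitors win if `l0 x ≥ l1 x`, otherwise right ones win. -/
noncomputable def longClusterStep (x : ZMod N → Bool) : ZMod N → Bool :=
  if l1 x ≤ l0 x then leftStep x else rightStep x

/-- Free flight dynamics (no delays): every particle flips its cell. -/
def flipAll (x : ZMod N → Bool) : ZMod N → Bool := fun i => !(x i)

/-- A state of free movement: no competition occurs now or at any future step
(so every particle moves forever and the dynamics is `flipAll`). -/
def IsFree (x : ZMod N → Bool) : Prop :=
  ∀ n : ℕ, ∀ i, ¬ Competes (flipAll^[n] x) i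

/-- Number of steps to first reach a free-movement state under rule `S` (`⊤ = ∞` if never). -/
noncomputable def reachTime (S : (ZMod N → Bool) → ZMod N → Bool)
    (x : ZMod N → Bool) : ℕ∞ :=
  sInf ((↑) '' {n : ℕ | IsFree (S^[n] x)})

end ContourChain

namespace ContourChain

variable {N : ℕ}

/-- The set of run lengths used in `maxRun`. -/
def runSet (x : ZMod N → Bool) (b : Bool) : Set ℕ :=
  {s : ℕ | s ≤ N ∧ ∃ i : ZMod N, ∀ k : ℕ, k < s → x (i + (k : ZMod N)) = b}

lemma maxRun_def (x : ZMod N → Bool) (b : Bool) : maxRun x b = sSup (runSet x b) := rfl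

lemma zero_mem_runSet (x : ZMod N → Bool) (b : Bool) : 0 ∈ runSet x b :=
  ⟨Nat.zero_le N, 0, fun k hk => absurd hk (Nat.not_lt_zero k)⟩

lemma bddAbove_runSet (x : ZMod N → Bool) (b : Bool) : BddAbove (runSet x b) :=
  ⟨N, fun _ hs => hs.1⟩

lemma le_maxRun {x : ZMod N → Bool} {b : Bool} {s : ℕ} (h : s ∈ runSet x b) :
    s ≤ maxRun x b := le_csSup (bddAbove_runSet x b) h

lemma maxRun_mem (x : ZMod N → Bool) (b : Bool) : maxRun x b ∈ runSet x b :=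
  Nat.sSup_mem ⟨0, zero_mem_runSet x b⟩ (bddAbove_runSet x b)

lemma maxRun_le {x : ZMod N → Bool} {b : Bool} {m : ℕ} (h : ∀ s ∈ runSet x b, s ≤ m) :
    maxRun x b ≤ m := csSup_le ⟨0, zero_mem_runSet x b⟩ h

/-- Adjacent-constant states. -/
def Const (x : ZMod N → Bool) : Prop := ∀ i, x (i + 1) = x i

lemma Const.shift {x : ZMod N → Bool} (h : Const x) (i : ZMod N) (k : ℕ) :
    x (i + (k : ZMod N)) = x i := by
  induction k with
  | zero => simp
  | succ k ih =>
      have e : ((k + 1 : ℕ) : ZMod N) = (k : ZMod N) + 1 := by push_cast; ring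
      rw [e, ← add_assoc, h (i + (k : ZMod N)), ih]

lemma eq_const_of_run (hN : 0 < N) {y : ZMod N → Bool} {b : Bool} {i : ZMod N}
    (h : ∀ k : ℕ, k < N → y (i + (k : ZMod N)) = b) (j : ZMod N) : y j = b := by
  haveI : NeZero N := ⟨hN.ne'⟩
  have hv := h (j - i).val (ZMod.val_lt _)
  have e : i + (((j - i).val : ℕ) : ZMod N) = j := by
    rw [ZMod.natCast_val, ZMod.cast_id]; ring
  rwa [e] at hv

lemma const_of_forall_eq {x : ZMod N → Bool} {b : Bool} (h : ∀ i, x i = b) : Const x :=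
  fun i => by rw [h, h]

lemma maxRun_eq_zero_iff (hN : 0 < N) (x : ZMod N → Bool) (b : Bool) :
    maxRun x b = 0 ↔ ∀ i, x i ≠ b := by
  constructor
  · intro h i hi
    have h1 : 1 ∈ runSet x b := ⟨hN, i, by
      intro k hk
      interval_cases k
      simpa using hi⟩
    have := le_maxRun h1
    omega
  · intro h
    refine Nat.le_zero.1 (maxRun_le ?_)
    rintro s ⟨hs, i, hrun⟩
    rcases Nat.eq_zero_or_pos s with rfl | hp
    · exact le_rfl
    · exact absurd (hrun 0 hp) (by simpa using h i)

lemma lmin_eq_zero_iff (hN : 0 < N) (x : ZMod N → Bool) : lmin x = 0 ↔ Const x := by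
  haveI : NeZero N := ⟨hN.ne'⟩
  constructor
  · intro h
    have : maxRun x false = 0 ∨ maxRun x true = 0 := by
      simp only [lmin, l0, l1] at h; omega
    rcases this with h0 | h0
    · exact const_of_forall_eq (b := true)
        (fun i => by
          have := (maxRun_eq_zero_iff hN x false).1 h0 i
          cases hx : x i <;> simp_all)
    · exact const_of_forall_eq (b := false)
        (fun i => by
          have := (maxRun_eq_zero_iff hN x true).1 h0 i
          cases hx : x i <;> simp_all)
  · intro h
    have hall : ∀ j, x j = x 0 := by
      intro j
      have := h.shift 0 j.val
      rwa [ZMod.natCast_val, ZMod.cast_id, zero_add] at this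
    cases h0 : x 0
    · have : maxRun x true = 0 := (maxRun_eq_zero_iff hN x true).2
        (fun i => by rw [hall i, h0]; simp)
      simp only [lmin, l0, l1, this]; omega
    · have : maxRun x false = 0 := (maxRun_eq_zero_iff hN x false).2
        (fun i => by rw [hall i, h0]; simp)
      simp only [lmin, l0, l1, this]; omega

lemma Const.flipAll {x : ZMod N → Bool} (h : Const x) : Const (ContourChain.flipAll x) :=
  fun i => by simp [ContourChain.flipAll, h i]

lemma not_competes_of_const {x : ZMod N → Bool} (h : Const x) (i : ZMod N) :
    ¬ Competes x i := by
  rintro ⟨h1, h2⟩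
  rw [h i, h1] at h2
  cases h2

lemma isFree_iff_const (x : ZMod N → Bool) : IsFree x ↔ Const x := by
  constructor
  · intro h i
    have h0 := h 0 i
    have h1 := h 1 i
    simp only [Function.iterate_zero, Function.iterate_one, id_eq, Competes,
      ContourChain.flipAll] at h0 h1
    cases hxi : x i <;> cases hx1 : x (i + 1) <;> simp_all
  · intro h n i
    have hc : Const (ContourChain.flipAll^[n] x) := by
      induction n with
      | zero => exact h
      | succ n ih => rw [Function.iterate_succ_apply']; exact ih.flipAll
    exact not_competes_of_const hc i

lemma isStep_leftStep (x : ZMod N → Bool) : IsStep x (leftStep x) := by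
  refine ⟨fun i h => ?_, fun i hc => ?_⟩
  · by_cases hc : x i = true ∧ x (i - 1) = false
    · exact Or.inr ⟨hc.2, by rw [sub_add_cancel]; exact hc.1⟩
    · simp only [leftStep, if_neg hc] at h
      cases hx : x i <;> simp_all
  · obtain ⟨h1, h2⟩ := hc
    have e1 : leftStep x i = true := by
      simp [leftStep, h1]
    have e2 : leftStep x (i + 1) = true := by
      simp [leftStep, h1, h2, add_sub_cancel_right]
    rw [e1, e2, h1, h2]
    simp

lemma isStep_rightStep (x : ZMod N → Bool) : IsStep x (rightStep x) := by
  refine ⟨fun i h => ?_, fun i hc => ?_⟩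
  · by_cases hc : x i = false ∧ x (i + 1) = true
    · exact Or.inl hc
    · simp only [rightStep, if_neg hc] at h
      cases hx : x i <;> simp_all
  · obtain ⟨h1, h2⟩ := hc
    have e1 : rightStep x i = x i := by
      simp only [rightStep, if_pos (And.intro h1 h2)]
      rw [h1]
    have e2 : rightStep x (i + 1) = !(x (i + 1)) := by
      simp only [rightStep]
      rw [if_neg (by simp [h2])]
    simp [e1, e2]

lemma isStep_longClusterStep (x : ZMod N → Bool) : IsStep x (longClusterStep x) := by
  unfold longClusterStep
  split_ifs
  · exact isStep_leftStep x
  · exact isStep_rightStep x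

lemma IsStep.flip {x x' : ZMod N → Bool} (h : IsStep x x') {i : ZMod N}
    (h1 : ¬ Competes x i) (h2 : ¬ Competes x (i - 1)) : x' i = !(x i) := by
  rcases eq_or_ne (x' i) (x i) with he | he
  · rcases h.1 i he with hco | hco
    · exact absurd hco h1
    · exact absurd hco h2
  · cases hx : x i <;> cases hx' : x' i <;> simp_all

lemma maxRun_true_step {x x' : ZMod N → Bool} (h : IsStep x x') :
    maxRun x false - 1 ≤ maxRun x' true := by
  obtain ⟨hsN, i, hrun⟩ := maxRun_mem x false
  refine le_maxRun ⟨by omega, i, fun k hk => ?_⟩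
  have hflip : x' (i + (k : ZMod N)) = !(x (i + (k : ZMod N))) := by
    refine h.flip ?_ ?_
    · rintro ⟨_, hc⟩
      have e : ((k + 1 : ℕ) : ZMod N) = (k : ZMod N) + 1 := by push_cast; ring
      have hv := hrun (k + 1) (by omega)
      rw [e, ← add_assoc] at hv
      rw [hv] at hc
      cases hc
    · rintro ⟨_, hc⟩
      rw [sub_add_cancel, hrun k (by omega)] at hc
      cases hc
  rw [hflip, hrun k (by omega)]
  rfl

lemma maxRun_false_step {x x' : ZMod N → Bool} (h : IsStep x x') :
    maxRun x true - 1 ≤ maxRun x' false := by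
  obtain ⟨hsN, i, hrun⟩ := maxRun_mem x true
  refine le_maxRun ⟨by omega, i + 1, fun k hk => ?_⟩
  have e : i + 1 + (k : ZMod N) = i + ((k + 1 : ℕ) : ZMod N) := by push_cast; ring
  have hflip : x' (i + 1 + (k : ZMod N)) = !(x (i + 1 + (k : ZMod N))) := by
    refine h.flip ?_ ?_
    · rintro ⟨hc, _⟩
      rw [e, hrun (k + 1) (by omega)] at hc
      cases hc
    · rintro ⟨hc, _⟩
      have e2 : i + 1 + (k : ZMod N) - 1 = i + (k : ZMod N) := by ring
      rw [e2, hrun k (by omega)] at hc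
      cases hc
  rw [hflip, e, hrun (k + 1) (by omega)]
  rfl

lemma lmin_step {x x' : ZMod N → Bool} (h : IsStep x x') : lmin x - 1 ≤ lmin x' := by
  have h1 := maxRun_true_step h
  have h2 := maxRun_false_step h
  simp only [lmin, l0, l1]
  omega

lemma leftStep_false {x : ZMod N → Bool} {j : ZMod N} (h : leftStep x j = false) :
    x j = true ∧ x (j - 1) = true := by
  by_cases hc : x j = true ∧ x (j - 1) = false
  · simp only [leftStep, if_pos hc] at h
    cases h
  · simp only [leftStep, if_neg hc] at h
    have hj : x j = true := by cases hxj : x j <;> simp_all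
    refine ⟨hj, ?_⟩
    cases hj1 : x (j - 1)
    · exact absurd ⟨hj, hj1⟩ hc
    · rfl

lemma rightStep_true {x : ZMod N → Bool} {j : ZMod N} (h : rightStep x j = true) :
    x j = false ∧ x (j + 1) = false := by
  by_cases hc : x j = false ∧ x (j + 1) = true
  · simp only [rightStep, if_pos hc] at h
    cases h
  · simp only [rightStep, if_neg hc] at h
    have hj : x j = false := by cases hxj : x j <;> simp_all
    refine ⟨hj, ?_⟩
    cases hj1 : x (j + 1)
    · rfl
    · exact absurd ⟨hj, hj1⟩ hc

lemma maxRun_leftStep_le (hN : 0 < N) {x : ZMod N → Bool} (hx : ¬ Const x) :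
    maxRun (leftStep x) false ≤ maxRun x true - 1 := by
  refine maxRun_le ?_
  rintro s ⟨hsN, i, hrun⟩
  rcases Nat.eq_zero_or_pos s with rfl | hs
  · exact Nat.zero_le _
  have key : ∀ k : ℕ, k < s + 1 → x (i - 1 + (k : ZMod N)) = true := by
    intro k hk
    rcases Nat.eq_zero_or_pos k with rfl | hkp
    · have := (leftStep_false (hrun 0 hs)).2
      simpa using this
    · have hv := (leftStep_false (hrun (k - 1) (by omega))).1
      have e : i - 1 + (k : ZMod N) = i + ((k - 1 : ℕ) : ZMod N) := by
        rw [Nat.cast_sub (by omega : 1 ≤ k)]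
        push_cast
        ring
      rw [e]
      exact hv
  have hs1 : s + 1 ≤ N := by
    by_contra hlt
    have hsN' : s = N := by omega
    subst hsN'
    exact hx (const_of_forall_eq (eq_const_of_run hN (fun k hk => key k (by omega))))
  have := le_maxRun ⟨hs1, i - 1, key⟩
  omega

lemma maxRun_rightStep_le (hN : 0 < N) {x : ZMod N → Bool} (hx : ¬ Const x) :
    maxRun (rightStep x) true ≤ maxRun x false - 1 := by
  refine maxRun_le ?_
  rintro s ⟨hsN, i, hrun⟩
  rcases Nat.eq_zero_or_pos s with rfl | hs
  · exact Nat.zero_le _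
  have key : ∀ k : ℕ, k < s + 1 → x (i + (k : ZMod N)) = false := by
    intro k hk
    rcases Nat.lt_or_ge k s with hks | hks
    · exact (rightStep_true (hrun k hks)).1
    · have hks' : k = s := by omega
      subst hks'
      have hv := (rightStep_true (hrun (k - 1) (by omega))).2
      have e : i + ((k - 1 : ℕ) : ZMod N) + 1 = i + (k : ZMod N) := by
        rw [Nat.cast_sub (by omega : 1 ≤ k)]
        push_cast
        ring
      rwa [e] at hv
  have hs1 : s + 1 ≤ N := by
    by_contra hlt
    have hsN' : s = N := by omega
    subst hsN'
    exact hx (const_of_forall_eq (eq_const_of_run hN (fun k hk => key k (by omega))))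
  have := le_maxRun ⟨hs1, i, key⟩
  omega

lemma Const.leftStep {x : ZMod N → Bool} (h : Const x) :
    Const (ContourChain.leftStep x) := by
  have e : ∀ j, ContourChain.leftStep x j = !(x j) := by
    intro j
    simp only [ContourChain.leftStep]
    rw [if_neg]
    rintro ⟨h1, h2⟩
    have hj := h (j - 1)
    rw [sub_add_cancel, h1, h2] at hj
    cases hj
  intro i
  rw [e, e, h i]

lemma Const.rightStep {x : ZMod N → Bool} (h : Const x) :
    Const (ContourChain.rightStep x) := by
  have e : ∀ j, ContourChain.rightStep x j = !(x j) := by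
    intro j
    simp only [ContourChain.rightStep]
    rw [if_neg]
    rintro ⟨h1, h2⟩
    have hj := h j
    rw [h1, h2] at hj
    cases hj
  intro i
  rw [e, e, h i]

lemma Const.longClusterStep {x : ZMod N → Bool} (h : Const x) :
    Const (ContourChain.longClusterStep x) := by
  unfold ContourChain.longClusterStep
  split_ifs
  · exact h.leftStep
  · exact h.rightStep

lemma lmin_longClusterStep (hN : 0 < N) (x : ZMod N → Bool) :
    lmin (longClusterStep x) = lmin x - 1 := by
  by_cases hx : Const x
  · rw [(lmin_eq_zero_iff hN _).2 hx.longClusterStep, (lmin_eq_zero_iff hN x).2 hx]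
  · have hub : lmin (longClusterStep x) ≤ lmin x - 1 := by
      by_cases hl : l1 x ≤ l0 x
      · have hstep : longClusterStep x = leftStep x := by
          unfold longClusterStep; rw [if_pos hl]
        rw [hstep]
        have := maxRun_leftStep_le hN hx
        simp only [lmin, l0, l1] at *
        omega
      · have hstep : longClusterStep x = rightStep x := by
          unfold longClusterStep; rw [if_neg hl]
        rw [hstep]
        have := maxRun_rightStep_le hN hx
        simp only [lmin, l0, l1] at *
        omega
    have hlb := lmin_step (isStep_longClusterStep x)
    have hpos : lmin x ≠ 0 := fun h0 => hx ((lmin_eq_zero_iff hN x).1 h0)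
    omega

lemma lmin_iterate (hN : 0 < N) (x : ZMod N → Bool) (n : ℕ) :
    lmin (longClusterStep^[n] x) = lmin x - n := by
  induction n with
  | zero => simp
  | succ n ih =>
      rw [Function.iterate_succ_apply', lmin_longClusterStep hN, ih]
      omega

lemma lmin_le_iterate {S : (ZMod N → Bool) → ZMod N → Bool} (hS : ∀ y, IsStep y (S y))
    (x : ZMod N → Bool) (n : ℕ) : lmin x ≤ lmin (S^[n] x) + n := by
  induction n with
  | zero => simp
  | succ n ih =>
      have hstep := lmin_step (hS (S^[n] x))
      rw [Function.iterate_succ_apply']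
      omega

/-- `a(x, S₀) = l(x)` and `a(x, S) ≥ l(x)` for every competition resolution
rule `S`, i.e. the long cluster rule minimizes the time to reach free movement from
every initial state. -/
theorem longCluster_optimal (hN : 0 < N) :
    (∀ x : ZMod N → Bool, reachTime longClusterStep x = (lmin x : ℕ∞)) ∧
    (∀ S : (ZMod N → Bool) → ZMod N → Bool, (∀ y, IsStep y (S y)) →
      ∀ x : ZMod N → Bool, (lmin x : ℕ∞) ≤ reachTime S x) := by
  constructor
  · intro x
    refine le_antisymm (sInf_le ⟨lmin x, ?_, rfl⟩) (le_sInf ?_)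
    · simp only [Set.mem_setOf_eq]
      rw [isFree_iff_const]
      refine (lmin_eq_zero_iff hN _).1 ?_
      rw [lmin_iterate hN]
      omega
    · rintro a ⟨n, hn, rfl⟩
      simp only [Set.mem_setOf_eq] at hn
      have h0 : lmin (longClusterStep^[n] x) = 0 :=
        (lmin_eq_zero_iff hN _).2 ((isFree_iff_const _).1 hn)
      rw [lmin_iterate hN] at h0
      exact_mod_cast (by omega : lmin x ≤ n)
  · intro S hS x
    refine le_sInf ?_
    rintro a ⟨n, hn, rfl⟩
    simp only [Set.mem_setOf_eq] at hn
    have h0 : lmin (S^[n] x) = 0 :=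
      (lmin_eq_zero_iff hN _).2 ((isFree_iff_const _).1 hn)
    have := lmin_le_iterate hS x n
    exact_mod_cast (by omega : lmin x ≤ n)

end ContourChain
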